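/- Suppose that for every matrix Z ∈ ℝ^{m×n} it holds that Σ_{t∈K} d̂_tᵀ Zᵀ f(x_t) ≤ Σ_{t∈K^c} ‖Zᵀ f(x_t)‖₂ (so that Ā is a global minimizer). Then Ā is the UNIQUE global minimizer over A ∈ ℝ^{n×m} of the loss g(A) = Σ_{t=0}^{T−1} ‖(Ā − A) f(x_t) + d̄_t‖₂ if and only if for every nonzero Z ∈ ℝ^{m×n}: whenever Σ_{t∈K} d̂_tᵀ Zᵀ f(x_t) = Σ_{t∈K^c} ‖Zᵀ f(x_t)‖₂, it follows that Σ_{t∈K} |d̂_tᵀ Zᵀ f(x_t)| < Σ_{t∈K} ‖Zᵀ f(x_t)‖₂. -/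

import Mathlib

/-!
Write `b_t = Zᵀ f(x_t)` for `A = Ā - Zᵀ` and `c_t = ⟪d̂_t, b_t⟫`. Cauchy–Schwarz against the unit
vector `d̂_t` gives `‖b_t + d̄_t‖ ≥ ‖d̄_t‖ + c_t`, with equality only when `b_t` is parallel
to `d̄_t`. Hence `g(A) - g(Ā) ≥ Σ_K c_t + Σ_{K^c} ‖b_t‖`, which is `≥ 0` by the optimality
condition at `-Z`, and the inequality is strict unless that sum vanishes and `|c_t| = ‖b_t‖` for
every `t ∈ K`. Conversely, in that case every `b_t` (`t ∈ K`) is parallel to `d̄_t`, so for small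
`ε > 0` the loss along `Ā + ε Zᵀ` is affine in `ε` with slope `-Σ_K c_t + Σ_{K^c} ‖b_t‖ = 0`.
-/

open Matrix
open scoped BigOperators Classical

/-- Euclidean norm of a vector in `ℝ^k`. -/
noncomputable def e2norm {k : ℕ} (v : Fin k → ℝ) : ℝ := Real.sqrt (∑ i, (v i) ^ 2)

/-- Normalized attack direction `d̂ = d / ‖d‖₂`. -/
noncomputable def dhat {k : ℕ} (v : Fin k → ℝ) : Fin k → ℝ := (e2norm v)⁻¹ • v

open Finset NormedSpace Filter Topology RealInnerProductSpace

theorem Finset.exists_pos_forall_mul_le {ι : Type*} (s : Finset ι) (c a : ι → ℝ)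
    (ha : ∀ i ∈ s, 0 < a i) : ∃ ε > (0 : ℝ), ∀ i ∈ s, ε * c i ≤ a i := by
  have hsmall : ∀ᶠ ε in 𝓝[>] (0 : ℝ), ∀ i ∈ s, ε * c i ≤ a i := by
    rw [eventually_all_finset]
    intro i hi
    have hlim : Tendsto (fun ε : ℝ => ε * c i) (𝓝[>] 0) (𝓝 0) :=
      ((continuous_mul_const (c i)).tendsto' 0 0 (zero_mul _)).mono_left nhdsWithin_le_nhds
    exact (hlim.eventually (gt_mem_nhds (ha i hi))).mono fun _ h => h.le
  exact (hsmall.and self_mem_nhdsWithin).exists.imp fun ε h => ⟨h.2, h.1⟩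

section InnerProductSpace

variable {E : Type*} [NormedAddCommGroup E] [InnerProductSpace ℝ E]

theorem inner_eq_norm_mul_inner_normalize (d b : E) : ⟪d, b⟫ = ‖d‖ * ⟪normalize d, b⟫ := by
  conv_lhs => rw [← norm_smul_normalize d]
  exact real_inner_smul_left _ _ _

theorem norm_add_inner_normalize_le (d b : E) : ‖d‖ + ⟪normalize d, b⟫ ≤ ‖b + d‖ := by
  rcases eq_or_ne d 0 with rfl | hd
  · simp
  have hself : ⟪normalize d, d⟫ = ‖d‖ := by
    have h := inner_eq_norm_mul_inner_normalize d d
    rw [real_inner_comm, real_inner_self_eq_norm_sq, sq] at h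
    exact (mul_left_cancel₀ (norm_ne_zero_iff.2 hd) h).symm
  simpa [inner_add_right, hself, norm_normalize hd, add_comm] using
    real_inner_le_norm (normalize d) (b + d)

theorem norm_add_inner_normalize_lt (d : E) {b : E} (h : |⟪normalize d, b⟫| < ‖b‖) :
    ‖d‖ + ⟪normalize d, b⟫ < ‖b + d‖ := by
  refine (norm_add_inner_normalize_le d b).lt_of_ne fun heq => h.ne ?_
  have hsq := norm_add_sq_real b d
  rw [real_inner_comm, inner_eq_norm_mul_inner_normalize, ← heq] at hsq
  exact (sq_eq_sq₀ (abs_nonneg _) (norm_nonneg b)).1 (by rw [sq_abs]; linarith)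

theorem norm_sub_smul_eq_of_abs_inner_normalize_eq (d : E) {b : E} {ε : ℝ}
    (h : |⟪normalize d, b⟫| = ‖b‖) (hε : ε * ⟪normalize d, b⟫ ≤ ‖d‖) :
    ‖d - ε • b‖ = ‖d‖ - ε * ⟪normalize d, b⟫ := by
  refine (sq_eq_sq₀ (norm_nonneg _) (sub_nonneg.2 hε)).1 ?_
  rw [norm_sub_sq_real, real_inner_smul_right, inner_eq_norm_mul_inner_normalize, norm_smul,
    mul_pow, ← h, Real.norm_eq_abs, sq_abs, sq_abs]
  ring

end InnerProductSpace

section Sums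

variable {ι E : Type*} [NormedAddCommGroup E] (S : Finset ι) (d : ι → E)

theorem sum_filter_ne_zero_norm :
    ∑ t ∈ S with d t ≠ 0, ‖d t‖ = ∑ t ∈ S, ‖d t‖ :=
  sum_filter_of_ne fun _ _ h => norm_ne_zero_iff.1 h

variable [InnerProductSpace ℝ E]

theorem exists_pos_sum_norm_sub_smul_eq {b : ι → E}
    (heq : ∑ t ∈ S with d t ≠ 0, ⟪normalize (d t), b t⟫ = ∑ t ∈ S with d t = 0, ‖b t‖)
    (habs : ∑ t ∈ S with d t ≠ 0, ‖b t‖ ≤ ∑ t ∈ S with d t ≠ 0, |⟪normalize (d t), b t⟫|) :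
    ∃ ε > (0 : ℝ), ∑ t ∈ S, ‖d t - ε • b t‖ = ∑ t ∈ S, ‖d t‖ := by
  have hcs : ∀ t ∈ {t ∈ S | d t ≠ 0}, |⟪normalize (d t), b t⟫| ≤ ‖b t‖ := fun t ht => by
    simpa [norm_normalize (mem_filter.1 ht).2] using abs_real_inner_le_norm (normalize (d t)) (b t)
  have hpar : ∀ t ∈ {t ∈ S | d t ≠ 0}, |⟪normalize (d t), b t⟫| = ‖b t‖ :=
    (sum_eq_sum_iff_of_le hcs).1 ((sum_le_sum hcs).antisymm habs)
  obtain ⟨ε, hε, hsmall⟩ := (S.filter (d · ≠ 0)).exists_pos_forall_mul_le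
    (fun t => ⟪normalize (d t), b t⟫) (‖d ·‖) fun t ht => norm_pos_iff.2 (mem_filter.1 ht).2
  refine ⟨ε, hε, ?_⟩
  have hKc : ∀ t ∈ {t ∈ S | d t = 0}, ‖d t - ε • b t‖ = ε * ‖b t‖ := fun t ht => by
    simp [(mem_filter.1 ht).2, norm_smul, hε.le]
  calc ∑ t ∈ S, ‖d t - ε • b t‖
      = ∑ t ∈ S with d t ≠ 0, ‖d t - ε • b t‖ + ∑ t ∈ S with d t = 0, ‖d t - ε • b t‖ :=
        (sum_filter_not_add_sum_filter _ _ _).symm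
    _ = ∑ t ∈ S with d t ≠ 0, (‖d t‖ - ε * ⟪normalize (d t), b t⟫) +
          ∑ t ∈ S with d t = 0, ε * ‖b t‖ := by
        rw [sum_congr rfl hKc, sum_congr rfl fun t ht =>
          norm_sub_smul_eq_of_abs_inner_normalize_eq _ (hpar t ht) (hsmall t ht)]
    _ = ∑ t ∈ S with d t ≠ 0, ‖d t‖ := by
        rw [sum_sub_distrib, ← mul_sum, ← mul_sum, heq, sub_add_cancel]
    _ = ∑ t ∈ S, ‖d t‖ := sum_filter_ne_zero_norm S d

theorem sum_norm_lt_sum_norm_add {b : ι → E}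
    (hnonneg : 0 ≤ ∑ t ∈ S with d t ≠ 0, ⟪normalize (d t), b t⟫ + ∑ t ∈ S with d t = 0, ‖b t‖)
    (hstrict : ∑ t ∈ S with d t ≠ 0, ⟪normalize (d t), b t⟫ + ∑ t ∈ S with d t = 0, ‖b t‖ = 0 →
      ∑ t ∈ S with d t ≠ 0, |⟪normalize (d t), b t⟫| < ∑ t ∈ S with d t ≠ 0, ‖b t‖) :
    ∑ t ∈ S, ‖d t‖ < ∑ t ∈ S, ‖b t + d t‖ := by
  have hKc : ∀ t ∈ {t ∈ S | d t = 0}, ‖b t + d t‖ = ‖b t‖ := fun t ht => by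
    simp [(mem_filter.1 ht).2]
  have hsplit : ∑ t ∈ S, ‖b t + d t‖ =
      ∑ t ∈ S with d t ≠ 0, ‖b t + d t‖ + ∑ t ∈ S with d t = 0, ‖b t‖ := by
    rw [← sum_congr rfl hKc]; exact (sum_filter_not_add_sum_filter _ _ _).symm
  have hle : ∑ t ∈ S with d t ≠ 0, (‖d t‖ + ⟪normalize (d t), b t⟫) ≤
      ∑ t ∈ S with d t ≠ 0, ‖b t + d t‖ :=
    sum_le_sum fun t _ => norm_add_inner_normalize_le (d t) (b t)
  rw [sum_add_distrib] at hle
  rw [hsplit, ← sum_filter_ne_zero_norm]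
  rcases hnonneg.lt_or_eq with hpos | hzero
  · linarith
  obtain ⟨t, ht, hlt⟩ := exists_lt_of_sum_lt (hstrict hzero.symm)
  have hlt' : ∑ t ∈ S with d t ≠ 0, (‖d t‖ + ⟪normalize (d t), b t⟫) <
      ∑ t ∈ S with d t ≠ 0, ‖b t + d t‖ :=
    sum_lt_sum (fun t _ => norm_add_inner_normalize_le (d t) (b t))
      ⟨t, ht, norm_add_inner_normalize_lt (d t) hlt⟩
  rw [sum_add_distrib] at hlt'
  linarith

end Sums

section LinearFamily

variable {ι V E : Type*} [AddCommGroup V] [Module ℝ V] [NormedAddCommGroup E]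
  [InnerProductSpace ℝ E] (S : Finset ι) (d : ι → E) (b : ι → V →ₗ[ℝ] E)

theorem forall_sum_norm_lt_sum_norm_add_iff
    (hopt : ∀ z, ∑ t ∈ S with d t ≠ 0, ⟪normalize (d t), b t z⟫ ≤
      ∑ t ∈ S with d t = 0, ‖b t z‖) :
    (∀ z ≠ 0, ∑ t ∈ S, ‖d t‖ < ∑ t ∈ S, ‖b t z + d t‖) ↔
      ∀ z ≠ 0, ∑ t ∈ S with d t ≠ 0, ⟪normalize (d t), b t z⟫ = ∑ t ∈ S with d t = 0, ‖b t z‖ →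
        ∑ t ∈ S with d t ≠ 0, |⟪normalize (d t), b t z⟫| < ∑ t ∈ S with d t ≠ 0, ‖b t z‖ := by
  constructor
  · intro hmin z hz heq
    by_contra! habs
    obtain ⟨ε, hε, hsum⟩ := exists_pos_sum_norm_sub_smul_eq S d heq habs
    have hlt := hmin (-(ε • z)) (by simp [hε.ne', hz])
    simp only [map_neg, map_smul, neg_add_eq_sub, hsum] at hlt
    exact hlt.false
  · intro hcond z hz
    have hopt' := hopt (-z)
    simp only [map_neg, inner_neg_right, norm_neg, sum_neg_distrib] at hopt'
    refine sum_norm_lt_sum_norm_add S d (by linarith) fun hzero => ?_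
    have hcond' := hcond (-z) (neg_ne_zero.2 hz)
    simp only [map_neg, inner_neg_right, norm_neg, sum_neg_distrib, abs_neg] at hcond'
    exact hcond' (by linarith)

end LinearFamily

theorem e2norm_eq_norm_toLp {k : ℕ} (v : Fin k → ℝ) : e2norm v = ‖WithLp.toLp 2 v‖ := by
  simp [e2norm, EuclideanSpace.norm_eq]

theorem dhat_dotProduct_eq_inner {k : ℕ} (v w : Fin k → ℝ) :
    dhat v ⬝ᵥ w = ⟪normalize (WithLp.toLp 2 v), WithLp.toLp 2 w⟫ := by
  simp [dhat, NormedSpace.normalize, e2norm_eq_norm_toLp, EuclideanSpace.inner_eq_star_dotProduct,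
    dotProduct_comm]

theorem groundTruth_isUniqueGlobalMin_iff_general
    (T n m : ℕ)
    (f : (Fin n → ℝ) → (Fin m → ℝ))
    (Abar : Matrix (Fin n) (Fin m) ℝ)
    (d : ℕ → (Fin n → ℝ)) (x : ℕ → (Fin n → ℝ))
    (hopt : ∀ Z : Matrix (Fin m) (Fin n) ℝ,
        ∑ t ∈ (Finset.range T).filter (fun t => d t ≠ 0),
            dhat (d t) ⬝ᵥ Zᵀ.mulVec (f (x t)) ≤
          ∑ t ∈ (Finset.range T).filter (fun t => d t = 0),
            e2norm (Zᵀ.mulVec (f (x t)))) :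
    (∀ A : Matrix (Fin n) (Fin m) ℝ, A ≠ Abar →
        ∑ t ∈ Finset.range T, e2norm ((Abar - Abar).mulVec (f (x t)) + d t) <
          ∑ t ∈ Finset.range T, e2norm ((Abar - A).mulVec (f (x t)) + d t))
      ↔
    (∀ Z : Matrix (Fin m) (Fin n) ℝ, Z ≠ 0 →
        (∑ t ∈ (Finset.range T).filter (fun t => d t ≠ 0),
              dhat (d t) ⬝ᵥ Zᵀ.mulVec (f (x t)) =
            ∑ t ∈ (Finset.range T).filter (fun t => d t = 0),
              e2norm (Zᵀ.mulVec (f (x t)))) →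
          ∑ t ∈ (Finset.range T).filter (fun t => d t ≠ 0),
              |dhat (d t) ⬝ᵥ Zᵀ.mulVec (f (x t))| <
            ∑ t ∈ (Finset.range T).filter (fun t => d t ≠ 0),
              e2norm (Zᵀ.mulVec (f (x t)))) := by
  let b (t : ℕ) : Matrix (Fin m) (Fin n) ℝ →ₗ[ℝ] EuclideanSpace ℝ (Fin n) :=
    (WithLp.linearEquiv 2 ℝ (Fin n → ℝ)).symm.toLinearMap ∘ₗ vecMulBilin ℝ ℝ (f (x t))
  have hb (t : ℕ) (Z : Matrix (Fin m) (Fin n) ℝ) : b t Z = WithLp.toLp 2 (Zᵀ *ᵥ f (x t)) := by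
    simp [b, mulVec_transpose]
  have key := forall_sum_norm_lt_sum_norm_add_iff (Finset.range T) (fun t => WithLp.toLp 2 (d t)) b
    (by simpa [hb, dhat_dotProduct_eq_inner, e2norm_eq_norm_toLp] using hopt)
  have hsurj : Function.Surjective fun Z : Matrix (Fin m) (Fin n) ℝ => Abar - Zᵀ :=
    fun A => ⟨(Abar - A)ᵀ, by simp⟩
  rw [hsurj.forall]
  simpa [hb, dhat_dotProduct_eq_inner, e2norm_eq_norm_toLp] using key

/-- Theorem 3.1, necessary and sufficient condition for uniqueness.
Suppose the optimality condition `Σ_{t∈K} d̂_tᵀ Zᵀ f(x_t) ≤ Σ_{t∈K^c} ‖Zᵀ f(x_t)‖₂`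
holds for all `Z`. Then `Ā` is the unique global minimizer of
`g(A) = Σ_{t<T} ‖(Ā − A) f(x_t) + d̄_t‖₂` iff for every nonzero `Z`:
`Σ_{t∈K} d̂_tᵀ Zᵀ f(x_t) = Σ_{t∈K^c} ‖Zᵀ f(x_t)‖₂` implies
`Σ_{t∈K} |d̂_tᵀ Zᵀ f(x_t)| < Σ_{t∈K} ‖Zᵀ f(x_t)‖₂`. -/
theorem groundTruth_isUniqueGlobalMin_iff
    (T n m : ℕ) (hT : 0 < T) (hn : 0 < n) (hm : 0 < m)
    (f : (Fin n → ℝ) → (Fin m → ℝ))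
    (Abar : Matrix (Fin n) (Fin m) ℝ)
    (d : ℕ → (Fin n → ℝ)) (x : ℕ → (Fin n → ℝ))
    (hx0 : x 0 = 0)
    (hxstep : ∀ t < T, x (t + 1) = Abar.mulVec (f (x t)) + d t)
    (hopt : ∀ Z : Matrix (Fin m) (Fin n) ℝ,
        ∑ t ∈ (Finset.range T).filter (fun t => d t ≠ 0),
            dhat (d t) ⬝ᵥ Zᵀ.mulVec (f (x t)) ≤
          ∑ t ∈ (Finset.range T).filter (fun t => d t = 0),
            e2norm (Zᵀ.mulVec (f (x t)))) :
    (∀ A : Matrix (Fin n) (Fin m) ℝ, A ≠ Abar →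
        ∑ t ∈ Finset.range T, e2norm ((Abar - Abar).mulVec (f (x t)) + d t) <
          ∑ t ∈ Finset.range T, e2norm ((Abar - A).mulVec (f (x t)) + d t))
      ↔
    (∀ Z : Matrix (Fin m) (Fin n) ℝ, Z ≠ 0 →
        (∑ t ∈ (Finset.range T).filter (fun t => d t ≠ 0),
              dhat (d t) ⬝ᵥ Zᵀ.mulVec (f (x t)) =
            ∑ t ∈ (Finset.range T).filter (fun t => d t = 0),
              e2norm (Zᵀ.mulVec (f (x t)))) →
          ∑ t ∈ (Finset.range T).filter (fun t => d t ≠ 0),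
              |dhat (d t) ⬝ᵥ Zᵀ.mulVec (f (x t))| <
            ∑ t ∈ (Finset.range T).filter (fun t => d t ≠ 0),
              e2norm (Zᵀ.mulVec (f (x t)))) :=
  groundTruth_isUniqueGlobalMin_iff_general T n m f Abar d x hopt
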